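/- arXiv:2408.15393 — 8 statements merged into one kernel-verified Lean document; each statement's English description precedes it below -/
import Mathlib

section
/- Let K ⊂ ℝ be compact. The linear span of the family of Gaussian radial basis functions {x ↦ exp(−a(x − τ)²) : a > 0, τ ∈ ℝ}, restricted to K, is dense in the space C(K, ℝ) of continuous real-valued functions on K equipped with the supremum norm. -/
/-!
A product of two Gaussians is a constant multiple of a Gaussian (complete the square), so
the span of the Gaussians is closed under multiplication, and hence so is its uniform
closure. That closure also contains `1 = lim_{a → 0⁺} exp(-a x²)`, so it is a closed
subalgebra of `C(K, ℝ)`; it separates points because `exp(-(x - τ)²)` peaks only at `x = τ`.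
Stone–Weierstrass then forces it to be everything.
-/

open Filter Topology

namespace Submodule

variable {R A : Type*} [CommSemiring R] [Semiring A] [Algebra R A]

theorem span_mul_span_le_of_mul_mem {s : Set A} (h : ∀ x ∈ s, ∀ y ∈ s, x * y ∈ span R s) :
    span R s * span R s ≤ span R s := by
  rw [span_mul_span, span_le]
  rintro _ ⟨x, hx, y, hy, rfl⟩
  exact h x hx y hy

theorem topologicalClosure_mul_le [TopologicalSpace A] [ContinuousAdd A] [ContinuousMul A]
    [ContinuousConstSMul R A] {p : Submodule R A} (hp : p * p ≤ p) :
    p.topologicalClosure * p.topologicalClosure ≤ p.topologicalClosure :=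
  mul_le.mpr fun _ hx _ hy =>
    map_mem_closure₂ continuous_mul hx hy fun _ ha _ hb => hp (mul_mem_mul ha hb)

end Submodule

noncomputable section

namespace GaussianRBF

variable (K : Set ℝ)

def gaussian (a τ : ℝ) : C(K, ℝ) :=
  ⟨fun x => Real.exp (-a * ((x : ℝ) - τ) ^ 2), by fun_prop⟩

def gaussians : Set C(K, ℝ) :=
  {φ | ∃ a : ℝ, 0 < a ∧ ∃ τ : ℝ, ∀ x : K, φ x = Real.exp (-a * ((x : ℝ) - τ) ^ 2)}

variable {K}

theorem mem_gaussians_iff {φ : C(K, ℝ)} :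
    φ ∈ gaussians K ↔ ∃ a, 0 < a ∧ ∃ τ, φ = gaussian K a τ := by
  simp only [gaussians, Set.mem_ofPred_eq, ContinuousMap.ext_iff]
  rfl

theorem gaussian_mem_gaussians {a : ℝ} (ha : 0 < a) (τ : ℝ) :
    gaussian K a τ ∈ gaussians K :=
  mem_gaussians_iff.mpr ⟨a, ha, τ, rfl⟩

@[simp]
theorem gaussian_zero (τ : ℝ) : gaussian K 0 τ = 1 := by
  ext x
  simp [gaussian]

-- Complete the square in `a (x - τ)² + b (x - σ)²`.
theorem gaussian_mul_gaussian {a b : ℝ} (ha : 0 < a) (hb : 0 < b) (τ σ : ℝ) :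
    gaussian K a τ * gaussian K b σ =
      Real.exp (-(a * b / (a + b)) * (τ - σ) ^ 2) •
        gaussian K (a + b) ((a * τ + b * σ) / (a + b)) := by
  have hab : a + b ≠ 0 := by positivity
  ext x
  simp only [gaussian, ContinuousMap.mul_apply, ContinuousMap.smul_apply,
    ContinuousMap.coe_mk, smul_eq_mul, ← Real.exp_add]
  congr 1
  field_simp
  ring

theorem span_gaussians_mul_le :
    Submodule.span ℝ (gaussians K) * Submodule.span ℝ (gaussians K) ≤
      Submodule.span ℝ (gaussians K) := by
  refine Submodule.span_mul_span_le_of_mul_mem fun φ hφ ψ hψ => ?_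
  obtain ⟨a, ha, τ, rfl⟩ := mem_gaussians_iff.mp hφ
  obtain ⟨b, hb, σ, rfl⟩ := mem_gaussians_iff.mp hψ
  rw [gaussian_mul_gaussian ha hb]
  exact Submodule.smul_mem _ _ (Submodule.subset_span (gaussian_mem_gaussians (by positivity) _))

theorem continuous_gaussian (τ : ℝ) : Continuous fun a => gaussian K a τ :=
  (ContinuousMap.curry
    ⟨fun p : ℝ × K => Real.exp (-p.1 * ((p.2 : ℝ) - τ) ^ 2), by fun_prop⟩).continuous

theorem one_mem_closure_span_gaussians :
    (1 : C(K, ℝ)) ∈ (Submodule.span ℝ (gaussians K)).topologicalClosure := by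
  have h : Tendsto (fun a => gaussian K a 0) (𝓝[>] 0) (𝓝 1) := by
    simpa using ((continuous_gaussian 0).tendsto 0).mono_left nhdsWithin_le_nhds
  refine mem_closure_of_tendsto h ?_
  filter_upwards [self_mem_nhdsWithin] with a ha
  exact Submodule.subset_span (gaussian_mem_gaussians ha 0)

theorem gaussian_apply_ne_of_ne {x y : K} (hxy : x ≠ y) :
    gaussian K 1 x x ≠ gaussian K 1 x y := by
  have : (y : ℝ) - x ≠ 0 := sub_ne_zero.mpr (Subtype.coe_ne_coe.mpr hxy.symm)
  simp [gaussian, eq_comm (a := (1 : ℝ)), this]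

variable [CompactSpace K]

variable (K) in
def closureSpanGaussians : Subalgebra ℝ C(K, ℝ) :=
  (Submodule.span ℝ (gaussians K)).topologicalClosure.toSubalgebra one_mem_closure_span_gaussians
    fun _ _ hf hg =>
      Submodule.topologicalClosure_mul_le span_gaussians_mul_le (Submodule.mul_mem_mul hf hg)

theorem closureSpanGaussians_separatesPoints : (closureSpanGaussians K).SeparatesPoints :=
  fun x _ hxy => ⟨_, ⟨gaussian K 1 x, Submodule.le_topologicalClosure _
    (Submodule.subset_span (gaussian_mem_gaussians one_pos _)), rfl⟩,
      gaussian_apply_ne_of_ne hxy⟩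

theorem dense_span_gaussians : Dense (Submodule.span ℝ (gaussians K) : Set C(K, ℝ)) := by
  have := congrArg SetLike.coe <|
    ContinuousMap.subalgebra_topologicalClosure_eq_top_of_separatesPoints
      (closureSpanGaussians K) closureSpanGaussians_separatesPoints
  rw [Subalgebra.topologicalClosure_coe, Algebra.coe_top] at this
  simpa [closureSpanGaussians, dense_iff_closure_eq] using this

end GaussianRBF

end

/-- For compact `K ⊆ ℝ`, the linear span of the Gaussian radial basis
functions `x ↦ exp(−a(x − τ)²)` (`a > 0`, `τ ∈ ℝ`), restricted to `K`, is dense in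
`C(K, ℝ)` (uniform convergence on `K`). -/
theorem stmt_2 (K : Set ℝ) (hK : IsCompact K) :
    Dense (↑(Submodule.span ℝ
      {φ : C(K, ℝ) | ∃ a : ℝ, 0 < a ∧ ∃ τ : ℝ,
        ∀ x : K, φ x = Real.exp (-a * ((x : ℝ) - τ) ^ 2)}) : Set C(K, ℝ)) := by
  have := isCompact_iff_compactSpace.mp hK
  exact GaussianRBF.dense_span_gaussians
end

section
/- Let d ≥ 1, let f : ℝ × ℝ^d → ℝ^d be continuous in its first argument and Lipschitz in its second, let t₀ < T, and let u : [t₀, T] → ℝ^d be the (unique) solution of u'(t) = f(t, u(t)), u(t₀) = u₀. Then for every ε > 0 there exist N ∈ ℕ, weights w_{j,k} ∈ ℝ, shape parameters a_j > 0 and centers τ_j ∈ ℝ (j = 1, …, N, k = 1, …, d) such that for every component k, sup_{t ∈ [t₀, T]} | u^{(k)}(t) − u₀^{(k)} − (t − t₀) Σ_{j=1}^{N} w_{j,k} exp(−a_j (t − τ_j)²) | < ε. -/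
/-!
The difference quotient `(u t - u t₀) / (t - t₀)`, completed by `u'(t₀)` at `t₀`, is continuous
on `[t₀, T]`, so it suffices to approximate continuous functions on a compact set `K` uniformly by
sums of Gaussians. Products of Gaussians are multiples of Gaussians (complete the square) and flat
Gaussians tend to `1`, so the closure of the span of the Gaussians is a closed subalgebra of
`C(K, ℝ)`; it separates points, hence is everything by Stone–Weierstrass. The approximations of the
`d` components are merged into one network by concatenating their parameters.
-/

open Set Real Function Submodule

noncomputable def gaussianSum {N : ℕ} (w a τ : Fin N → ℝ) (t : ℝ) : ℝ :=
  ∑ j, w j * exp (-(a j) * (t - τ j) ^ 2)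

noncomputable def gaussianOn (K : Set ℝ) (a τ : ℝ) : C(K, ℝ) :=
  ⟨fun x => exp (-a * ((x : ℝ) - τ) ^ 2), by fun_prop⟩

def gaussiansOn (K : Set ℝ) : Set C(K, ℝ) :=
  {g | ∃ a > 0, ∃ τ, g = gaussianOn K a τ}

variable {K : Set ℝ}

@[simp]
lemma gaussianOn_apply (a τ : ℝ) (x : K) : gaussianOn K a τ x = exp (-a * ((x : ℝ) - τ) ^ 2) :=
  rfl

lemma gaussianOn_zero_left (τ : ℝ) : gaussianOn K 0 τ = 1 := by
  ext x
  simp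

lemma gaussianOn_mul_gaussianOn {a b : ℝ} (hab : a + b ≠ 0) (τ σ : ℝ) :
    gaussianOn K a τ * gaussianOn K b σ =
      exp (-(a * b / (a + b)) * (τ - σ) ^ 2) •
        gaussianOn K (a + b) ((a * τ + b * σ) / (a + b)) := by
  ext x
  simp only [ContinuousMap.mul_apply, ContinuousMap.smul_apply, gaussianOn_apply, smul_eq_mul,
    ← exp_add]
  congr 1
  field_simp
  ring

lemma mul_mem_span_gaussiansOn {f g : C(K, ℝ)} (hf : f ∈ span ℝ (gaussiansOn K))
    (hg : g ∈ span ℝ (gaussiansOn K)) : f * g ∈ span ℝ (gaussiansOn K) := by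
  have hfg := Submodule.mul_mem_mul hf hg
  rw [span_mul_span] at hfg
  refine span_le.2 ?_ hfg
  rintro _ ⟨_, ⟨a, ha, τ, rfl⟩, _, ⟨b, hb, σ, rfl⟩, rfl⟩
  change gaussianOn K a τ * gaussianOn K b σ ∈ _
  rw [gaussianOn_mul_gaussianOn (by positivity)]
  exact smul_mem _ _ (subset_span ⟨a + b, by positivity, _, rfl⟩)

lemma continuous_gaussianOn_left (τ : ℝ) : Continuous fun a => gaussianOn K a τ :=
  ContinuousMap.continuous_of_continuous_uncurry _ <| by
    simp only [gaussianOn_apply]; fun_prop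

lemma one_mem_closure_span_gaussiansOn :
    (1 : C(K, ℝ)) ∈ (span ℝ (gaussiansOn K)).topologicalClosure := by
  have h := (continuous_gaussianOn_left (K := K) 0).continuousWithinAt.mem_closure_image
    (by simp : (0 : ℝ) ∈ closure (Ioi 0))
  rw [gaussianOn_zero_left] at h
  refine closure_mono ?_ h
  rintro _ ⟨a, ha, rfl⟩
  exact subset_span ⟨a, ha, 0, rfl⟩

lemma mul_mem_closure_span_gaussiansOn [LocallyCompactSpace K] {f g : C(K, ℝ)}
    (hf : f ∈ (span ℝ (gaussiansOn K)).topologicalClosure)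
    (hg : g ∈ (span ℝ (gaussiansOn K)).topologicalClosure) :
    f * g ∈ (span ℝ (gaussiansOn K)).topologicalClosure := by
  rw [← SetLike.mem_coe, topologicalClosure_coe] at *
  exact map_mem_closure₂ continuous_mul hf hg fun _ hf' _ hg' =>
    mul_mem_span_gaussiansOn hf' hg'

lemma topologicalClosure_span_gaussiansOn [CompactSpace K] :
    (span ℝ (gaussiansOn K)).topologicalClosure = ⊤ := by
  let A : Subalgebra ℝ C(K, ℝ) := (span ℝ (gaussiansOn K)).topologicalClosure.toSubalgebra
    one_mem_closure_span_gaussiansOn fun _ _ => mul_mem_closure_span_gaussiansOn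
  have hsep : A.SeparatesPoints := by
    intro x y hxy
    refine ⟨_, ⟨gaussianOn K 1 y, subset_closure (subset_span ⟨1, one_pos, y, rfl⟩), rfl⟩, ?_⟩
    change exp _ ≠ exp _
    simpa [sub_eq_zero] using Subtype.coe_ne_coe.mpr hxy
  have hA : A = ⊤ := top_le_iff.1 <|
    (ContinuousMap.subalgebra_topologicalClosure_eq_top_of_separatesPoints A hsep).ge.trans
      (A.topologicalClosure_minimal le_rfl (span ℝ (gaussiansOn K)).isClosed_topologicalClosure)
  simpa [A] using congrArg Subalgebra.toSubmodule hA

lemma exists_gaussianSum_near {h : ℝ → ℝ} (hK : IsCompact K) (hh : ContinuousOn h K) {ε : ℝ}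
    (hε : 0 < ε) : ∃ (N : ℕ) (w a τ : Fin N → ℝ), (∀ j, 0 < a j) ∧
      ∀ t ∈ K, |h t - gaussianSum w a τ t| < ε := by
  have := isCompact_iff_compactSpace.mp hK
  let H : C(K, ℝ) := ⟨K.domRestrict h, hh.domRestrict⟩
  have hH : H ∈ closure (span ℝ (gaussiansOn K) : Set C(K, ℝ)) := by
    rw [← topologicalClosure_coe, topologicalClosure_span_gaussiansOn]
    trivial
  obtain ⟨p, hp, hHp⟩ := Metric.mem_closure_iff.mp hH ε hε
  obtain ⟨N, w, g, rfl⟩ := mem_span_set'.mp hp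
  choose a ha τ hτ using fun j => (g j).2
  refine ⟨N, w, a, τ, ha, fun t ht => ?_⟩
  have hsum : (∑ j, w j • (g j : C(K, ℝ))) ⟨t, ht⟩ = gaussianSum w a τ t := by
    simp [hτ, gaussianSum]
  rw [← hsum, ← Real.dist_eq]
  exact (ContinuousMap.dist_apply_le_dist (f := H) ⟨t, ht⟩).trans_lt hHp

lemma sub_smul_update_slope {𝕜 E : Type*} [Field 𝕜] [DecidableEq 𝕜] [AddCommGroup E]
    [Module 𝕜 E] (f : 𝕜 → E) (a b : 𝕜) (v : E) :
    (b - a) • update (slope f a) a v b = f b - f a := by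
  rcases eq_or_ne b a with rfl | hb
  · simp
  · rw [update_of_ne hb, sub_smul_slope, vsub_eq_sub]

-- Not `dslope`: its value `deriv f a` at `a` is junk unless `f` is differentiable at `a`.
lemma ContinuousOn.update_slope {E : Type*} [NormedAddCommGroup E] [NormedSpace ℝ E]
    {f : ℝ → E} {s : Set ℝ} {a : ℝ} {v : E} (hf : ContinuousOn f s)
    (hv : HasDerivWithinAt f v s a) : ContinuousOn (update (slope f a) a v) s := by
  intro t ht
  rcases eq_or_ne t a with rfl | hta
  · exact continuousWithinAt_update_same.2 (hasDerivWithinAt_iff_tendsto_slope.mp hv)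
  · refine (continuousWithinAt_update_of_ne hta).2 ?_
    rw [funext (slope_def_module f a)]
    exact ((continuousWithinAt_id.sub continuousWithinAt_const).inv₀ (sub_ne_zero.2 hta)).smul
      ((hf t ht).sub continuousWithinAt_const)

lemma exists_gaussianSum_near_of_hasDerivWithinAt {φ : ℝ → ℝ} {t₀ T φ' ε : ℝ} (hT : t₀ ≤ T)
    (hφ : ContinuousOn φ (Icc t₀ T)) (hφ' : HasDerivWithinAt φ φ' (Icc t₀ T) t₀) (hε : 0 < ε) :
    ∃ (N : ℕ) (w a τ : Fin N → ℝ), (∀ j, 0 < a j) ∧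
      ∀ t ∈ Icc t₀ T, |φ t - φ t₀ - (t - t₀) * gaussianSum w a τ t| < ε := by
  obtain ⟨N, w, a, τ, ha, hw⟩ := exists_gaussianSum_near isCompact_Icc (hφ.update_slope hφ')
    (div_pos hε (by linarith : 0 < T - t₀ + 1))
  refine ⟨N, w, a, τ, ha, fun t ht => ?_⟩
  have hlen : |t - t₀| ≤ T - t₀ := abs_le.2 ⟨by linarith [ht.1, ht.2], by linarith [ht.2]⟩
  rw [← sub_smul_update_slope φ t₀ t φ', smul_eq_mul, ← mul_sub, abs_mul]
  calc |t - t₀| * |update (slope φ t₀) t₀ φ' t - gaussianSum w a τ t|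
      ≤ (T - t₀) * (ε / (T - t₀ + 1)) :=
        mul_le_mul hlen (hw t ht).le (abs_nonneg _) (by linarith [ht.1, ht.2])
    _ < (T - t₀ + 1) * (ε / (T - t₀ + 1)) := by gcongr; linarith
    _ = ε := mul_div_cancel₀ _ (by linarith)

lemma exists_common_gaussianSum {ι : Type*} [Fintype ι] [DecidableEq ι] (N : ι → ℕ)
    (w a τ : ∀ k, Fin (N k) → ℝ) (ha : ∀ k j, 0 < a k j) :
    ∃ (M : ℕ) (W : Fin M → ι → ℝ) (A S : Fin M → ℝ), (∀ j, 0 < A j) ∧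
      ∀ k t, gaussianSum (fun j => W j k) A S t = gaussianSum (w k) (a k) (τ k) t := by
  let e := (Fintype.equivFin (Σ k, Fin (N k))).symm
  refine ⟨_, fun j k => if (e j).1 = k then w _ (e j).2 else 0, fun j => a _ (e j).2,
    fun j => τ _ (e j).2, fun j => ha _ _, fun k t => ?_⟩
  simp only [gaussianSum]
  rw [e.sum_comp fun x => (if x.1 = k then w _ x.2 else 0) * exp (-(a _ x.2) * (t - τ _ x.2) ^ 2),
    Fintype.sum_sigma]
  simp [ite_mul]

theorem stmt_3_general (d : ℕ)
    (f : ℝ → EuclideanSpace ℝ (Fin d) → EuclideanSpace ℝ (Fin d))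
    (t₀ T : ℝ) (ht : t₀ < T)
    (u : ℝ → EuclideanSpace ℝ (Fin d)) (u₀ : EuclideanSpace ℝ (Fin d))
    (hu : ∀ t ∈ Set.Icc t₀ T, HasDerivWithinAt u (f t (u t)) (Set.Icc t₀ T) t)
    (hu0 : u t₀ = u₀) :
    ∀ ε > (0:ℝ), ∃ (N : ℕ) (w : Fin N → Fin d → ℝ) (a : Fin N → ℝ) (τ : Fin N → ℝ),
      (∀ j, 0 < a j) ∧
      ∀ k : Fin d, ∀ t ∈ Set.Icc t₀ T,
        |u t k - u₀ k -
          (t - t₀) * ∑ j : Fin N, w j k * Real.exp (-(a j) * (t - τ j) ^ 2)| < ε := by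
  intro ε hε
  have hcont : ContinuousOn u (Icc t₀ T) := fun t ht => (hu t ht).continuousWithinAt
  have hcomp : ∀ k : Fin d, ∃ (N : ℕ) (w a τ : Fin N → ℝ), (∀ j, 0 < a j) ∧
      ∀ t ∈ Icc t₀ T, |u t k - u₀ k - (t - t₀) * gaussianSum w a τ t| < ε := fun k => by
    let proj : EuclideanSpace ℝ (Fin d) →L[ℝ] ℝ := EuclideanSpace.proj k
    subst hu0
    exact exists_gaussianSum_near_of_hasDerivWithinAt ht.le
      (proj.continuous.comp_continuousOn hcont)
      (proj.hasFDerivAt.comp_hasDerivWithinAt t₀ (hu t₀ ⟨le_rfl, ht.le⟩)) hε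
  choose N w a τ ha hw using hcomp
  obtain ⟨M, W, A, S, hA, hW⟩ := exists_common_gaussianSum N w a τ ha
  exact ⟨M, W, A, S, hA, fun k t ht => by
    have hkt := hw k t ht
    rwa [← hW] at hkt⟩

/-- The PI-RPNN ansatz
`û⁽ᵏ⁾(t) = u₀⁽ᵏ⁾ + (t − t₀) Σⱼ w_{j,k} exp(−aⱼ(t − τⱼ)²)` can approximate the solution
of the IVP `u' = f(t,u)`, `u(t₀) = u₀` uniformly on `[t₀, T]` to any accuracy `ε > 0`. -/
theorem stmt_3 (d : ℕ) (hd : 1 ≤ d)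
    (f : ℝ → EuclideanSpace ℝ (Fin d) → EuclideanSpace ℝ (Fin d))
    (hf_cont : ∀ y, Continuous fun t => f t y)
    (L : NNReal) (hf_lip : ∀ t, LipschitzWith L (f t))
    (t₀ T : ℝ) (ht : t₀ < T)
    (u : ℝ → EuclideanSpace ℝ (Fin d)) (u₀ : EuclideanSpace ℝ (Fin d))
    (hu : ∀ t ∈ Set.Icc t₀ T, HasDerivWithinAt u (f t (u t)) (Set.Icc t₀ T) t)
    (hu0 : u t₀ = u₀) :
    ∀ ε > (0:ℝ), ∃ (N : ℕ) (w : Fin N → Fin d → ℝ) (a : Fin N → ℝ) (τ : Fin N → ℝ),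
      (∀ j, 0 < a j) ∧
      ∀ k : Fin d, ∀ t ∈ Set.Icc t₀ T,
        |u t k - u₀ k -
          (t - t₀) * ∑ j : Fin N, w j k * Real.exp (-(a j) * (t - τ j) ^ 2)| < ε :=
  stmt_3_general d f t₀ T ht u u₀ hu hu0
end

section
/- Let M ≥ 1 be an integer, s > 0 and ζ ∈ (0, 1]. Define D = (1/3)(1 + 3/(2M) + 1/(2M²)) + s(1 + 1/M) + s² and S = 1 − ζ·( ½(1 + 1/M) + s ) / D. Then D > 0 and −1 < S < 1. -/
/-!
With `a = 1/M`, the denominator is `D = 1/3 + a/2 + a²/6 + s(1 + a) + s²` and the numerator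
`N = (1 + a)/2 + s`. Both are positive for `a, s ≥ 0`, and `2D - N = 1/6 + a/2 + a²/3 + s(1 + 2a) + 2s²`
is positive as well, so `0 < ζN/D < 2` for `ζ ∈ (0, 1]`.
-/

namespace StabilityIndex

noncomputable def den (a s : ℝ) : ℝ := 1/3 + a/2 + a^2/6 + s * (1 + a) + s^2

noncomputable def num (a s : ℝ) : ℝ := (1 + a)/2 + s

variable {a s : ℝ}

lemma num_pos (ha : 0 ≤ a) (hs : 0 ≤ s) : 0 < num a s := by
  unfold num; positivity

lemma num_lt_two_mul_den (ha : 0 ≤ a) (hs : 0 ≤ s) : num a s < 2 * den a s := by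
  have h : 2 * den a s - num a s = 1/6 + a/2 + a^2/3 + s * (1 + 2*a) + 2 * s^2 := by
    unfold den num; ring
  have : 0 < 1/6 + a/2 + a^2/3 + s * (1 + 2*a) + 2 * s^2 := by positivity
  linarith

end StabilityIndex

lemma neg_one_lt_one_sub_mul_div_and_lt_one {ζ N D : ℝ} (hζ : ζ ∈ Set.Ioc (0:ℝ) 1)
    (hN : 0 < N) (hND : N < 2 * D) : -1 < 1 - ζ * N / D ∧ 1 - ζ * N / D < 1 := by
  obtain ⟨hζ0, hζ1⟩ := hζ
  have hD : 0 < D := by linarith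
  have hζN : ζ * N < 2 * D := by nlinarith
  have : 0 < ζ * N / D := by positivity
  have : ζ * N / D < 2 := (div_lt_iff₀ hD).mpr (by linarith)
  constructor <;> linarith

theorem stmt_9_general (M : ℕ) (s : ℝ) (hs : 0 < s)
    (ζ : ℝ) (hζ : ζ ∈ Set.Ioc (0:ℝ) 1) :
    let D : ℝ := (1/3) * (1 + 3 / (2 * (M : ℝ)) + 1 / (2 * (M : ℝ) ^ 2))
        + s * (1 + 1 / (M : ℝ)) + s ^ 2
    let S : ℝ := 1 - ζ * ((1/2) * (1 + 1 / (M : ℝ)) + s) / D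
    0 < D ∧ -1 < S ∧ S < 1 := by
  intro D S
  have ha : (0:ℝ) ≤ (M:ℝ)⁻¹ := by positivity
  have hD : D = StabilityIndex.den (M:ℝ)⁻¹ s := by
    simp only [D, StabilityIndex.den]; ring
  have hN : (1/2) * (1 + 1 / (M : ℝ)) + s = StabilityIndex.num (M:ℝ)⁻¹ s := by
    simp only [StabilityIndex.num]; ring
  have hNpos := StabilityIndex.num_pos ha hs.le
  have hND := StabilityIndex.num_lt_two_mul_den ha hs.le
  refine ⟨by rw [hD]; linarith, ?_⟩
  simpa only [S, hN, hD] using neg_one_lt_one_sub_mul_div_and_lt_one hζ hNpos hND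

/-- For integer `M ≥ 1`, `s > 0`, `ζ ∈ (0,1]`, the denominator
`D = (1/3)(1 + 3/(2M) + 1/(2M²)) + s(1 + 1/M) + s²` is positive and the limiting
stability index `S = 1 − ζ(½(1 + 1/M) + s)/D` satisfies `−1 < S < 1`. -/
theorem stmt_9 (M : ℕ) (hM : 1 ≤ M) (s : ℝ) (hs : 0 < s)
    (ζ : ℝ) (hζ : ζ ∈ Set.Ioc (0:ℝ) 1) :
    let D : ℝ := (1/3) * (1 + 3 / (2 * (M : ℝ)) + 1 / (2 * (M : ℝ) ^ 2))
        + s * (1 + 1 / (M : ℝ)) + s ^ 2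
    let S : ℝ := 1 - ζ * ((1/2) * (1 + 1 / (M : ℝ)) + s) / D
    0 < D ∧ -1 < S ∧ S < 1 :=
  stmt_9_general M s hs ζ hζ
end

section
/- Let M ≥ 1 be an integer and z > 0 with 1/z > ½(1 + 1/M). Define D = (1/3)(1 + 3/(2M) + 1/(2M²)) − (1/z)(1 + 1/M) + 1/z² and S_M = 1 − ( ½(1 + 1/M) − 1/z ) / D. Then D > 0 and S_M > 1. -/
/-!
With `m = 1/M` and `w = 1/z`, completing the square gives
`D = (w - (1 + m)/2)^2 + (1 - m^2)/12`. For a natural number `M` we have `0 ≤ m ≤ 1`, and the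
hypothesis makes the square strictly positive, so `D > 0`. The same hypothesis says that the
numerator `(1 + m)/2 - w` of the correction term is negative, hence `S_M = 1 - (negative)/D > 1`.
-/

/-- Division by `0` is `0`, so the identity also holds at `x = 0`. -/
theorem collocation_denominator_eq_sq_add {K : Type*} [Field K] [CharZero K] (x z : K) :
    (1/3) * (1 + 3 / (2 * x) + 1 / (2 * x ^ 2)) - (1 / z) * (1 + 1 / x) + 1 / z ^ 2
      = (1 / z - (1/2) * (1 + 1 / x)) ^ 2 + (1 - (1 / x) ^ 2) / 12 := by
  ring

section
variable {K : Type*} [Field K] [LinearOrder K] [IsStrictOrderedRing K]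

theorem collocation_denominator_pos {x z : K} (hx : (1 / x) ^ 2 ≤ 1)
    (hz : (1/2) * (1 + 1 / x) < 1 / z) :
    0 < (1/3) * (1 + 3 / (2 * x) + 1 / (2 * x ^ 2)) - (1 / z) * (1 + 1 / x) + 1 / z ^ 2 := by
  rw [collocation_denominator_eq_sq_add]
  have hsq : 0 < (1 / z - (1/2) * (1 + 1 / x)) ^ 2 := pow_pos (sub_pos.2 hz) 2
  linarith

theorem Nat.one_div_cast_sq_le_one (n : ℕ) : (1 / (n : K)) ^ 2 ≤ 1 :=
  pow_le_one₀ (Nat.one_div_cast_nonneg n) (by simpa only [one_div] using Nat.cast_inv_le_one n)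

end

theorem stmt_10_general (M : ℕ) (z : ℝ)
    (hzM : (1/2) * (1 + 1 / (M : ℝ)) < 1 / z) :
    let D : ℝ := (1/3) * (1 + 3 / (2 * (M : ℝ)) + 1 / (2 * (M : ℝ) ^ 2))
        - (1 / z) * (1 + 1 / (M : ℝ)) + 1 / z ^ 2
    let S : ℝ := 1 - ((1/2) * (1 + 1 / (M : ℝ)) - 1 / z) / D
    0 < D ∧ 1 < S := by
  intro D S
  have hD : 0 < D := collocation_denominator_pos (Nat.one_div_cast_sq_le_one M) hzM
  have hquot : ((1/2) * (1 + 1 / (M : ℝ)) - 1 / z) / D < 0 :=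
    div_neg_of_neg_of_pos (sub_neg.2 hzM) hD
  exact ⟨hD, by linarith⟩

/-- For integer `M ≥ 1` and `z > 0` with `1/z > ½(1 + 1/M)`, the
denominator `D = (1/3)(1 + 3/(2M) + 1/(2M²)) − (1/z)(1 + 1/M) + 1/z²` is positive and
the limiting stability index at the last collocation point,
`S_M = 1 − (½(1 + 1/M) − 1/z)/D`, satisfies `S_M > 1` (instability for `λ > 0`). -/
theorem stmt_10 (M : ℕ) (hM : 1 ≤ M) (z : ℝ) (hz : 0 < z)
    (hzM : (1/2) * (1 + 1 / (M : ℝ)) < 1 / z) :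
    let D : ℝ := (1/3) * (1 + 3 / (2 * (M : ℝ)) + 1 / (2 * (M : ℝ) ^ 2))
        - (1 / z) * (1 + 1 / (M : ℝ)) + 1 / z ^ 2
    let S : ℝ := 1 - ((1/2) * (1 + 1 / (M : ℝ)) - 1 / z) / D
    0 < D ∧ 1 < S :=
  stmt_10_general M z hzM
end

section
/- Let N, M ≥ 1 and z < 0. Let Ψ⁰ ∈ ℝ^{N×M} have entries ψ⁰_{ji} = 1 − z·(i/M), and for i ∈ {1,…,M} set ζ_i = i/M. Then lim_{δ → 0⁺} [ 1 + z ζ_i 𝟏_Nᵀ (Ψ⁰(Ψ⁰)ᵀ + δ I_N)^{−1} Ψ⁰ 𝟏_M ] = 1 − ζ_i · ( ½(1 + 1/M) − 1/z ) / ( (1/3)(1 + 3/(2M) + 1/(2M²)) − (1/z)(1 + 1/M) + 1/z² ). -/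
/-!
All rows of `Ψ⁰` equal the vector `v k = 1 - z ζ_k`, so `Ψ⁰(Ψ⁰)ᵀ = (v ⬝ v) 𝟏𝟏ᵀ` and `𝟏` is an
eigenvector of `Ψ⁰(Ψ⁰)ᵀ + δ I_N` with eigenvalue `N (v ⬝ v) + δ`, while `Ψ⁰ 𝟏 = (∑ v) 𝟏`. Hence
the expression equals `1 + z ζ_i N (∑ v) / (N (v ⬝ v) + δ)`, which is continuous at `δ = 0` with
value `1 + z ζ_i (∑ v) / (v ⬝ v)`. The power sums of `k + 1` give `∑ v = M z J̄₀` and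
`v ⬝ v = M z² 𝔖₂`, and `𝔖₂ > 0` because `z < 0`.
-/

open Matrix Filter Topology

lemma sum_range_cast_add_one (n : ℕ) :
    ∑ k ∈ Finset.range n, ((k : ℝ) + 1) = n * (n + 1) / 2 := by
  induction n with
  | zero => simp
  | succ n ih => rw [Finset.sum_range_succ, ih]; push_cast; ring

lemma sum_range_cast_add_one_sq (n : ℕ) :
    ∑ k ∈ Finset.range n, ((k : ℝ) + 1) ^ 2 = (n : ℝ) * (n + 1) * (2 * n + 1) / 6 := by
  induction n with
  | zero => simp
  | succ n ih => rw [Finset.sum_range_succ, ih]; push_cast; ring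

namespace Matrix

variable {ι κ : Type*} [Fintype ι] [DecidableEq ι] [Fintype κ]

lemma isUnit_mul_transpose_add_smul_one (A : Matrix ι κ ℝ) {δ : ℝ} (hδ : 0 < δ) :
    IsUnit (A * Aᵀ + δ • 1) :=
  (PosDef.posSemidef_add (posSemidef_self_mul_conjTranspose A) (PosDef.one.smul hδ)).isUnit

lemma inv_mulVec_eq_inv_smul {K : Type*} [Field K] {B : Matrix ι ι K} (hB : IsUnit B)
    {x : ι → K} {μ : K} (hμ : μ ≠ 0) (h : B *ᵥ x = μ • x) : B⁻¹ *ᵥ x = μ⁻¹ • x := by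
  let := hB.invertible
  exact inv_mulVec_eq_vec (by rw [mulVec_smul, h, inv_smul_smul₀ hμ])

lemma replicateRow_mul_transpose_add_smul_one_mulVec_one (v : κ → ℝ) (δ : ℝ) :
    (replicateRow ι v * (replicateRow ι v)ᵀ + δ • 1) *ᵥ (fun _ => 1) =
      (Fintype.card ι * (v ⬝ᵥ v) + δ) • fun _ => 1 := by
  rw [add_mulVec, smul_mulVec, one_mulVec, transpose_replicateRow,
    replicateRow_mul_replicateCol]
  ext j
  simp [mulVec, dotProduct]

lemma one_dotProduct_inv_mulVec_replicateRow (v : κ → ℝ) {δ : ℝ} (hδ : 0 < δ) :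
    (fun _ => 1) ⬝ᵥ (replicateRow ι v * (replicateRow ι v)ᵀ + δ • 1)⁻¹ *ᵥ
        (replicateRow ι v *ᵥ fun _ => 1) =
      Fintype.card ι * (∑ j, v j) / (Fintype.card ι * (v ⬝ᵥ v) + δ) := by
  have hμ : 0 < Fintype.card ι * (v ⬝ᵥ v) + δ := by
    have : 0 ≤ v ⬝ᵥ v := Finset.sum_nonneg fun j _ => mul_self_nonneg (v j)
    positivity
  have hrow : replicateRow ι v *ᵥ (fun _ => 1) = (∑ j, v j) • fun _ => (1 : ℝ) := by
    ext; simp [replicateRow_mulVec_eq_const, dotProduct]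
  rw [hrow, mulVec_smul, inv_mulVec_eq_inv_smul (isUnit_mul_transpose_add_smul_one _ hδ) hμ.ne'
    (replicateRow_mul_transpose_add_smul_one_mulVec_one v δ)]
  simp only [dotProduct, Pi.smul_apply, smul_eq_mul, mul_one, one_mul, Finset.sum_const,
    Finset.card_univ, nsmul_eq_mul]
  field_simp

theorem tendsto_one_dotProduct_inv_mulVec_replicateRow [Nonempty ι] (v : κ → ℝ)
    (hv : v ⬝ᵥ v ≠ 0) :
    Tendsto (fun δ : ℝ => (fun _ => 1) ⬝ᵥ (replicateRow ι v * (replicateRow ι v)ᵀ + δ • 1)⁻¹ *ᵥ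
        (replicateRow ι v *ᵥ fun _ => 1)) (𝓝[>] 0) (𝓝 ((∑ j, v j) / (v ⬝ᵥ v))) := by
  have hcard : (Fintype.card ι : ℝ) ≠ 0 := Nat.cast_ne_zero.2 Fintype.card_ne_zero
  have hcont : ContinuousAt
      (fun δ : ℝ => Fintype.card ι * (∑ j, v j) / (Fintype.card ι * (v ⬝ᵥ v) + δ)) 0 :=
    continuousAt_const.div (continuousAt_const.add continuousAt_id) (by simp [hcard, hv])
  have hval : Fintype.card ι * (∑ j, v j) / (Fintype.card ι * (v ⬝ᵥ v) + 0) =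
      (∑ j, v j) / (v ⬝ᵥ v) := by
    rw [add_zero, mul_div_mul_left _ _ hcard]
  rw [← hval]
  exact (hcont.tendsto.mono_left nhdsWithin_le_nhds).congr'
    (eventually_nhdsWithin_of_forall fun δ hδ =>
      (one_dotProduct_inv_mulVec_replicateRow v hδ).symm)

end Matrix

/-- In the paper's notation `J̄₀ = -stabilityNum M z` and `𝔖₂ = stabilityDen M z`. -/
noncomputable def stabilityNum (M : ℕ) (z : ℝ) : ℝ := (1/2) * (1 + 1 / (M : ℝ)) - 1 / z

noncomputable def stabilityDen (M : ℕ) (z : ℝ) : ℝ :=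
  (1/3) * (1 + 3 / (2 * (M : ℝ)) + 1 / (2 * (M : ℝ) ^ 2)) - (1 / z) * (1 + 1 / (M : ℝ)) + 1 / z ^ 2

lemma stabilityDen_pos (M : ℕ) {z : ℝ} (hz : z < 0) : 0 < stabilityDen M z := by
  have hquad : 0 < (1/3) * (1 + 3 / (2 * (M : ℝ)) + 1 / (2 * (M : ℝ) ^ 2)) := by positivity
  have hlin : 0 < -(1 / z) * (1 + 1 / (M : ℝ)) :=
    mul_pos (neg_pos.2 (one_div_neg.2 hz)) (by positivity)
  have hconst : 0 < 1 / z ^ 2 := by have := hz.ne; positivity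
  unfold stabilityDen
  linarith

lemma sum_one_sub_mul_succ_div {M : ℕ} (hM : (M : ℝ) ≠ 0) {z : ℝ} (hz : z ≠ 0) :
    ∑ k : Fin M, (1 - z * (((k : ℕ) + 1 : ℝ) / M)) = -(M * z) * stabilityNum M z := by
  have hlinear : ∀ k : ℕ, 1 - z * (((k : ℝ) + 1) / M) = 1 - z / M * ((k : ℝ) + 1) :=
    fun k => by ring
  rw [Fin.sum_univ_eq_sum_range (fun k => 1 - z * (((k : ℝ) + 1) / M))]
  simp only [hlinear]
  rw [Finset.sum_sub_distrib, ← Finset.mul_sum, sum_range_cast_add_one, stabilityNum]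
  simp only [Finset.sum_const, Finset.card_range, nsmul_eq_mul, mul_one]
  field_simp
  ring

lemma sum_one_sub_mul_succ_div_sq {M : ℕ} (hM : (M : ℝ) ≠ 0) {z : ℝ} (hz : z ≠ 0) :
    ∑ k : Fin M, (1 - z * (((k : ℕ) + 1 : ℝ) / M)) ^ 2 = M * z ^ 2 * stabilityDen M z := by
  have hexpand : ∀ k : ℕ, (1 - z * (((k : ℝ) + 1) / M)) ^ 2 =
      1 - 2 * z / M * ((k : ℝ) + 1) + (z / M) ^ 2 * ((k : ℝ) + 1) ^ 2 := fun k => by ring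
  rw [Fin.sum_univ_eq_sum_range (fun k => (1 - z * (((k : ℝ) + 1) / M)) ^ 2)]
  simp only [hexpand]
  rw [Finset.sum_add_distrib, Finset.sum_sub_distrib, ← Finset.mul_sum, ← Finset.mul_sum,
    sum_range_cast_add_one, sum_range_cast_add_one_sq, stabilityDen]
  simp only [Finset.sum_const, Finset.card_range, nsmul_eq_mul, mul_one]
  field_simp
  ring

theorem stmt_12_general (N M : ℕ) (hN : 1 ≤ N) (z : ℝ) (hz : z < 0) (i : Fin M) :
    let ζ : Fin M → ℝ := fun i' => ((i' : ℕ) + 1 : ℝ) / (M : ℝ)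
    let Ψ0 : Matrix (Fin N) (Fin M) ℝ := Matrix.of fun _ i' => 1 - z * ζ i'
    Tendsto (fun δ : ℝ =>
        1 + z * ζ i * ((fun _ => (1:ℝ)) ⬝ᵥ
          ((Ψ0 * Ψ0ᵀ + δ • (1 : Matrix (Fin N) (Fin N) ℝ))⁻¹).mulVec
            (Ψ0.mulVec (fun _ => 1))))
      (nhdsWithin 0 (Set.Ioi 0))
      (nhds (1 - ζ i * ((1/2) * (1 + 1 / (M : ℝ)) - 1 / z) /
        ((1/3) * (1 + 3 / (2 * (M : ℝ)) + 1 / (2 * (M : ℝ) ^ 2))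
          - (1 / z) * (1 + 1 / (M : ℝ)) + 1 / z ^ 2))) := by
  intro ζ Ψ0
  have hM : (M : ℝ) ≠ 0 := Nat.cast_ne_zero.2 i.pos.ne'
  have : Nonempty (Fin N) := ⟨⟨0, hN⟩⟩
  set v : Fin M → ℝ := fun k => 1 - z * ζ k
  have hnorm : v ⬝ᵥ v = M * z ^ 2 * stabilityDen M z := by
    rw [← sum_one_sub_mul_succ_div_sq hM hz.ne]
    simp only [v, ζ, dotProduct, sq]
  have hden := (stabilityDen_pos M hz).ne'
  have hv : v ⬝ᵥ v ≠ 0 := by rw [hnorm]; have := hz.ne; positivity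
  have hlim := ((tendsto_one_dotProduct_inv_mulVec_replicateRow (ι := Fin N) v hv).const_mul
    (z * ζ i)).const_add 1
  rw [sum_one_sub_mul_succ_div hM hz.ne, hnorm] at hlim
  rw [show Ψ0 = replicateRow (Fin N) v from rfl]
  convert hlim using 2
  change 1 - ζ i * stabilityNum M z / stabilityDen M z = _
  field_simp [hz.ne]
  ring

/-- For `z < 0`, `Ψ⁰ ∈ ℝ^{N×M}` with entries `1 − z(i/M)` and
`ζᵢ = i/M`, the zeroth-order stability index with ridge parameter `δ` satisfies
`lim_{δ→0⁺} [1 + zζᵢ𝟏ᵀ(Ψ⁰(Ψ⁰)ᵀ + δI)⁻¹Ψ⁰𝟏]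
  = 1 − ζᵢ(½(1 + 1/M) − 1/z)/((1/3)(1 + 3/(2M) + 1/(2M²)) − (1/z)(1 + 1/M) + 1/z²)`. -/
theorem stmt_12 (N M : ℕ) (hN : 1 ≤ N) (hM : 1 ≤ M) (z : ℝ) (hz : z < 0) (i : Fin M) :
    let ζ : Fin M → ℝ := fun i' => ((i' : ℕ) + 1 : ℝ) / (M : ℝ)
    let Ψ0 : Matrix (Fin N) (Fin M) ℝ := Matrix.of fun _ i' => 1 - z * ζ i'
    Tendsto (fun δ : ℝ =>
        1 + z * ζ i * ((fun _ => (1:ℝ)) ⬝ᵥ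
          ((Ψ0 * Ψ0ᵀ + δ • (1 : Matrix (Fin N) (Fin N) ℝ))⁻¹).mulVec
            (Ψ0.mulVec (fun _ => 1))))
      (nhdsWithin 0 (Set.Ioi 0))
      (nhds (1 - ζ i * ((1/2) * (1 + 1 / (M : ℝ)) - 1 / z) /
        ((1/3) * (1 + 3 / (2 * (M : ℝ)) + 1 / (2 * (M : ℝ) ^ 2))
          - (1 / z) * (1 + 1 / (M : ℝ)) + 1 / z ^ 2))) :=
  stmt_12_general N M hN z hz i
end

section
/- Let λ ∈ ℝ, u₀ ∈ ℝ, δ > 0, N, M ≥ 1, θ ∈ [0,1]^N, and let α : (0,∞) → [0,∞) satisfy α(h) → 0 as h → 0⁺. Set ζ_i = i/M, ξ_j = j/N, γ_{ji} = ζ_i − ξ_j, and for h > 0 define Φ_i(h) ∈ ℝ^N with entries exp(−α(h) θ_j γ_{ji}²), Ψ(h) ∈ ℝ^{N×M} with entries ψ_{ji}(h) = (1 − λh ζ_i − 2α(h) θ_j γ_{ji} ζ_i) exp(−α(h) θ_j γ_{ji}²), and the one-step PI-RPNN value û_h(c_i) = u₀ (1 + λ h ζ_i Φ_i(h)ᵀ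 (Ψ(h)Ψ(h)ᵀ + δ I_N)^{−1} Ψ(h) 𝟏_M) at the collocation point c_i = t₀ + h ζ_i. Let u(t) = u₀ e^{λ(t − t₀)} be the exact solution of u' = λu, u(t₀) = u₀, and set ℰ_i(h) = u(c_i) − û_h(c_i). Then for each i, lim_{h → 0⁺} ℰ_i(h)/h = λ ζ_i u₀ · δ/(MN + δ); in particular ℰ_i(h) → 0 as h → 0⁺ for every fixed δ > 0, and the limit λ ζ_i u₀ δ/(MN + δ) tends to 0 as δ → 0⁺ or as M → ∞ (consistency of the scheme in these limits). -/
/-!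
As `h → 0⁺` we have `α(h) → 0`, so the feature vector `Φ(h)` tends to `𝟏_N` and the collocation
matrix `Ψ(h)` to the all-ones matrix `J`. Since `Ψ Ψᵀ + δ I` is positive definite for every `Ψ`,
the ridge response `Φᵀ (Ψ Ψᵀ + δ I)⁻¹ Ψ 𝟏_M` is continuous in `(Φ, Ψ)`, hence tends to its value
`MN / (MN + δ)` at `(𝟏, J)`. The exact solution has slope `λ ζᵢ u₀` at `t₀` while the scheme has
slope `λ ζᵢ u₀ · MN / (MN + δ)`; their difference is the limit of `ℰᵢ(h) / h`.
-/

open Matrix Filter Topology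

namespace Matrix

variable {n m : Type*} [Fintype n] [DecidableEq n] [Fintype m]

theorem posDef_mul_transpose_add_smul_one (Ψ : Matrix n m ℝ) {δ : ℝ} (hδ : 0 < δ) :
    (Ψ * Ψᵀ + δ • (1 : Matrix n n ℝ)).PosDef := by
  refine PosDef.posSemidef_add ?_ ?_
  · simpa using posSemidef_self_mul_conjTranspose Ψ
  · rw [smul_one_eq_diagonal]
    exact posDef_diagonal_iff.mpr fun _ => hδ

theorem continuous_inv_mul_transpose_add_smul_one {δ : ℝ} (hδ : 0 < δ) :
    Continuous fun Ψ : Matrix n m ℝ => (Ψ * Ψᵀ + δ • (1 : Matrix n n ℝ))⁻¹ := by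
  refine continuous_iff_continuousAt.mpr fun Ψ => ContinuousAt.comp (g := Inv.inv) ?_
    (by fun_prop : Continuous fun Ψ : Matrix n m ℝ => Ψ * Ψᵀ + δ • 1).continuousAt
  have hdet := (posDef_mul_transpose_add_smul_one Ψ hδ).isUnit
  exact continuousAt_matrix_inv _
    (NormedRing.inverse_continuousAt ((isUnit_iff_isUnit_det _).mp hdet).unit)

end Matrix

section Ridge

variable {n m : Type*} [Fintype n] [DecidableEq n] [Fintype m]

/-- `û_h(cᵢ) = u₀ (1 + λ h ζᵢ · ridgeResponse δ (Φ h) (Ψ h))`. -/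
noncomputable def ridgeResponse (δ : ℝ) (φ : n → ℝ) (Ψ : Matrix n m ℝ) : ℝ :=
  φ ⬝ᵥ (Ψ * Ψᵀ + δ • (1 : Matrix n n ℝ))⁻¹ *ᵥ (Ψ *ᵥ fun _ => 1)

theorem continuous_ridgeResponse {δ : ℝ} (hδ : 0 < δ) :
    Continuous fun p : (n → ℝ) × Matrix n m ℝ => ridgeResponse δ p.1 p.2 :=
  continuous_fst.dotProduct <|
    ((continuous_inv_mul_transpose_add_smul_one hδ).comp continuous_snd).matrix_mulVec
      (continuous_snd.matrix_mulVec continuous_const)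

theorem ridgeResponse_ones {δ : ℝ} (hδ : 0 < δ) :
    ridgeResponse δ (fun _ : n => 1) (of fun (_ : n) (_ : m) => (1 : ℝ)) =
      Fintype.card m * Fintype.card n / (Fintype.card m * Fintype.card n + δ) := by
  set J : Matrix n m ℝ := of fun _ _ => 1
  have : Invertible (J * Jᵀ + δ • (1 : Matrix n n ℝ)) :=
    (posDef_mul_transpose_add_smul_one J hδ).isUnit.invertible
  -- `J Jᵀ + δ I` has the constant vectors as eigenvectors, with eigenvalue `|m| |n| + δ`
  have hsolve : (J * Jᵀ + δ • (1 : Matrix n n ℝ))⁻¹ *ᵥ (J *ᵥ fun _ => 1) =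
      fun _ => Fintype.card m / (Fintype.card m * Fintype.card n + δ) := by
    refine inv_mulVec_eq_vec ?_
    rw [add_mulVec, ← mulVec_mulVec, smul_mulVec, one_mulVec]
    funext j
    simp only [J, mulVec, dotProduct, of_apply, transpose_apply, Pi.add_apply, Pi.smul_apply,
      smul_eq_mul, mul_one, one_mul, Finset.sum_const, Finset.card_univ, nsmul_eq_mul]
    field_simp
  rw [ridgeResponse, hsolve]
  simp only [dotProduct, one_mul, Finset.sum_const, Finset.card_univ, nsmul_eq_mul]
  field_simp

theorem tendsto_ridgeResponse_of_tendsto_ones {ι : Type*} {l : Filter ι} {δ : ℝ} (hδ : 0 < δ)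
    {φ : ι → n → ℝ} {Ψ : ι → Matrix n m ℝ} (hφ : Tendsto φ l (𝓝 fun _ => 1))
    (hΨ : Tendsto Ψ l (𝓝 (of fun _ _ => 1))) :
    Tendsto (fun x => ridgeResponse δ (φ x) (Ψ x)) l
      (𝓝 (Fintype.card m * Fintype.card n / (Fintype.card m * Fintype.card n + δ))) := by
  rw [← ridgeResponse_ones hδ]
  exact ((continuous_ridgeResponse hδ).tendsto _).comp (hφ.prodMk_nhds hΨ)

end Ridge

section Scalar

variable {ι : Type*} {l : Filter ι} {h a : ι → ℝ}

theorem tendsto_exp_neg_mul_mul_sq (ha : Tendsto a l (𝓝 0)) (t g : ℝ) :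
    Tendsto (fun x => Real.exp (-(a x) * t * g ^ 2)) l (𝓝 1) := by
  simpa using ((ha.neg.mul_const t).mul_const (g ^ 2)).rexp

theorem tendsto_collocation_feature (hh : Tendsto h l (𝓝 0)) (ha : Tendsto a l (𝓝 0))
    (lam z t g : ℝ) :
    Tendsto (fun x => (1 - lam * h x * z - 2 * a x * t * g * z) *
      Real.exp (-(a x) * t * g ^ 2)) l (𝓝 1) := by
  have hlin : Tendsto (fun x => 1 - lam * h x * z - 2 * a x * t * g * z) l (𝓝 1) := by
    simpa using (tendsto_const_nhds.sub ((hh.const_mul lam).mul_const z)).sub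
      ((((ha.const_mul 2).mul_const t).mul_const g).mul_const z)
  simpa using hlin.mul (tendsto_exp_neg_mul_mul_sq ha t g)

end Scalar

theorem tendsto_exp_mul_sub_one_div (c : ℝ) :
    Tendsto (fun h => (Real.exp (c * h) - 1) / h) (𝓝[≠] 0) (𝓝 c) := by
  have hder : HasDerivAt (fun h => Real.exp (c * h)) c 0 := by
    simpa using ((hasDerivAt_id (0 : ℝ)).const_mul c).exp
  simpa [div_eq_inv_mul] using hder.tendsto_slope_zero

theorem tendsto_local_error_div {c u0 q : ℝ} {Q : ℝ → ℝ} (hQ : Tendsto Q (𝓝[>] 0) (𝓝 q)) :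
    Tendsto (fun h => (u0 * Real.exp (c * h) - u0 * (1 + c * h * Q h)) / h) (𝓝[>] 0)
      (𝓝 (c * u0 * (1 - q))) := by
  have hlim := ((tendsto_exp_mul_sub_one_div c).mono_left (nhdsGT_le_nhdsNE 0)).const_mul u0
    |>.sub (hQ.const_mul (u0 * c))
  refine (hlim.congr' (eventually_nhdsWithin_of_forall fun h (hh : 0 < h) => ?_)).trans
    (by rw [show u0 * c - u0 * c * q = c * u0 * (1 - q) by ring])
  field_simp
  ring

theorem tendsto_div_add_self_nhdsGT_zero {a : ℝ} (ha : a ≠ 0) :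
    Tendsto (fun d : ℝ => d / (a + d)) (𝓝[>] 0) (𝓝 0) := by
  have hcont : Tendsto (fun d : ℝ => d / (a + d)) (𝓝 0) (𝓝 (0 / (a + 0))) :=
    tendsto_id.div (tendsto_const_nhds.add tendsto_id) (by simpa using ha)
  simpa using hcont.mono_left nhdsWithin_le_nhds

theorem tendsto_div_natCast_mul_add_atTop {b : ℝ} (hb : 0 < b) (δ : ℝ) :
    Tendsto (fun m : ℕ => δ / (m * b + δ)) atTop (𝓝 0) :=
  tendsto_const_nhds.div_atTop <|
    tendsto_atTop_add_const_right _ δ (tendsto_natCast_atTop_atTop.atTop_mul_const hb)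

theorem stmt_13_general (lam u0 : ℝ) (δ : ℝ) (hδ : 0 < δ)
    (N M : ℕ) (hN : 1 ≤ N)
    (θ : Fin N → ℝ)
    (α : ℝ → ℝ)
    (hα_lim : Tendsto α (nhdsWithin 0 (Set.Ioi 0)) (nhds 0))
    (t₀ : ℝ) (i : Fin M) :
    let ζ : Fin M → ℝ := fun i' => ((i' : ℕ) + 1 : ℝ) / (M : ℝ)
    let ξ : Fin N → ℝ := fun j => ((j : ℕ) + 1 : ℝ) / (N : ℝ)
    let γ : Fin N → Fin M → ℝ := fun j i' => ζ i' - ξ j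
    let Φ : ℝ → (Fin N → ℝ) := fun h j => Real.exp (-(α h) * θ j * (γ j i) ^ 2)
    let Ψ : ℝ → Matrix (Fin N) (Fin M) ℝ := fun h => Matrix.of fun j i' =>
      (1 - lam * h * ζ i' - 2 * α h * θ j * γ j i' * ζ i') *
        Real.exp (-(α h) * θ j * (γ j i') ^ 2)
    let uhat : ℝ → ℝ := fun h =>
      u0 * (1 + lam * h * ζ i * (Φ h ⬝ᵥ
        ((Ψ h * (Ψ h)ᵀ + δ • (1 : Matrix (Fin N) (Fin N) ℝ))⁻¹).mulVec
          ((Ψ h).mulVec (fun _ => 1))))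
    let u : ℝ → ℝ := fun t => u0 * Real.exp (lam * (t - t₀))
    let E : ℝ → ℝ := fun h => u (t₀ + h * ζ i) - uhat h
    Tendsto (fun h => E h / h) (nhdsWithin 0 (Set.Ioi 0))
      (nhds (lam * ζ i * u0 * (δ / ((M : ℝ) * (N : ℝ) + δ)))) ∧
    Tendsto E (nhdsWithin 0 (Set.Ioi 0)) (nhds 0) ∧
    Tendsto (fun d : ℝ => lam * ζ i * u0 * (d / ((M : ℝ) * (N : ℝ) + d)))
      (nhdsWithin 0 (Set.Ioi 0)) (nhds 0) ∧
    Tendsto (fun m : ℕ => lam * ζ i * u0 * (δ / ((m : ℝ) * (N : ℝ) + δ)))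
      atTop (nhds 0) := by
  intro ζ ξ γ Φ Ψ uhat u E
  have hNpos : (0 : ℝ) < N := by exact_mod_cast hN
  have hMN : (0 : ℝ) < M * N := mul_pos (by exact_mod_cast i.pos) hNpos
  have hid : Tendsto (fun h : ℝ => h) (𝓝[>] 0) (𝓝 0) := nhdsWithin_le_nhds
  have hΦ : Tendsto Φ (𝓝[>] 0) (𝓝 fun _ => 1) :=
    tendsto_pi_nhds.2 fun j => tendsto_exp_neg_mul_mul_sq hα_lim _ _
  have hΨ : Tendsto Ψ (𝓝[>] 0) (𝓝 (of fun _ _ => 1)) :=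
    tendsto_pi_nhds.2 fun j => tendsto_pi_nhds.2 fun i' =>
      tendsto_collocation_feature hid hα_lim _ _ _ _
  have hQ := tendsto_ridgeResponse_of_tendsto_ones hδ hΦ hΨ
  simp only [Fintype.card_fin] at hQ
  have hdiv : Tendsto (fun h => E h / h) (𝓝[>] 0)
      (𝓝 (lam * ζ i * u0 * (δ / ((M : ℝ) * (N : ℝ) + δ)))) := by
    convert tendsto_local_error_div (c := lam * ζ i) (u0 := u0) hQ using 2 with h
    · simp only [E, u, uhat, ridgeResponse]
      ring_nf
    · field_simp
      ring
  refine ⟨hdiv, ?_, ?_, ?_⟩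
  · simpa using (hdiv.mul hid).congr'
      (eventually_nhdsWithin_of_forall fun h (hh : h ∈ Set.Ioi 0) => div_mul_cancel₀ _ (ne_of_gt hh))
  · simpa using (tendsto_div_add_self_nhdsGT_zero hMN.ne').const_mul (lam * ζ i * u0)
  · simpa using (tendsto_div_natCast_mul_add_atTop hNpos δ).const_mul (lam * ζ i * u0)

/-- consistency: For the one-step multi-collocation PI-RPNN scheme with
Gaussian features (effective shape parameter `α(h) → 0` as `h → 0⁺`), collocation points
`cᵢ = t₀ + hζᵢ`, and exact solution `u(t) = u₀e^{λ(t−t₀)}`, the local error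
`ℰᵢ(h) = u(cᵢ) − û_h(cᵢ)` satisfies `ℰᵢ(h)/h → λζᵢu₀·δ/(MN + δ)` as `h → 0⁺`; in
particular `ℰᵢ(h) → 0`, and the limit tends to `0` as `δ → 0⁺` or as `M → ∞`. -/
theorem stmt_13 (lam u0 : ℝ) (δ : ℝ) (hδ : 0 < δ)
    (N M : ℕ) (hN : 1 ≤ N) (hM : 1 ≤ M)
    (θ : Fin N → ℝ) (hθ : ∀ j, θ j ∈ Set.Icc (0:ℝ) 1)
    (α : ℝ → ℝ) (hα_nonneg : ∀ h : ℝ, 0 < h → 0 ≤ α h)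
    (hα_lim : Tendsto α (nhdsWithin 0 (Set.Ioi 0)) (nhds 0))
    (t₀ : ℝ) (i : Fin M) :
    let ζ : Fin M → ℝ := fun i' => ((i' : ℕ) + 1 : ℝ) / (M : ℝ)
    let ξ : Fin N → ℝ := fun j => ((j : ℕ) + 1 : ℝ) / (N : ℝ)
    let γ : Fin N → Fin M → ℝ := fun j i' => ζ i' - ξ j
    let Φ : ℝ → (Fin N → ℝ) := fun h j => Real.exp (-(α h) * θ j * (γ j i) ^ 2)
    let Ψ : ℝ → Matrix (Fin N) (Fin M) ℝ := fun h => Matrix.of fun j i' =>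
      (1 - lam * h * ζ i' - 2 * α h * θ j * γ j i' * ζ i') *
        Real.exp (-(α h) * θ j * (γ j i') ^ 2)
    let uhat : ℝ → ℝ := fun h =>
      u0 * (1 + lam * h * ζ i * (Φ h ⬝ᵥ
        ((Ψ h * (Ψ h)ᵀ + δ • (1 : Matrix (Fin N) (Fin N) ℝ))⁻¹).mulVec
          ((Ψ h).mulVec (fun _ => 1))))
    let u : ℝ → ℝ := fun t => u0 * Real.exp (lam * (t - t₀))
    let E : ℝ → ℝ := fun h => u (t₀ + h * ζ i) - uhat h
    Tendsto (fun h => E h / h) (nhdsWithin 0 (Set.Ioi 0))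
      (nhds (lam * ζ i * u0 * (δ / ((M : ℝ) * (N : ℝ) + δ)))) ∧
    Tendsto E (nhdsWithin 0 (Set.Ioi 0)) (nhds 0) ∧
    Tendsto (fun d : ℝ => lam * ζ i * u0 * (d / ((M : ℝ) * (N : ℝ) + d)))
      (nhdsWithin 0 (Set.Ioi 0)) (nhds 0) ∧
    Tendsto (fun m : ℕ => lam * ζ i * u0 * (δ / ((m : ℝ) * (N : ℝ) + δ)))
      atTop (nhds 0) :=
  stmt_13_general lam u0 δ hδ N M hN θ α hα_lim t₀ i
end

section
/- Let d ≥ 1, M ≥ 1, h > 0, let P ∈ ℝ^{d×d} be invertible and λ₁, …, λ_d < 0. For each j define s_j = 1/(|λ_j| h) and σ_j = 1 − ( ½(1 + 1/M) + s_j ) / ( (1/3)(1 + 3/(2M) + 1/(2M²)) + s_j(1 + 1/M) + s_j² ). Then |σ_j| < 1 for every j, and for every initial vector û₀ ∈ ℝ^d the iteration û_{ℓ+1} = P · diag(σ₁, …, σ_d) · P^{−1} û_ℓ converges to 0 as ℓ → ∞. -/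
/-!
Write `σ = 1 - N / D`. Then `|σ| < 1` as soon as `0 < N < 2 D`, and `2 D - N` is a polynomial in
`s ≥ 0` and `1 / M ≥ 0` with positive coefficients. Since conjugation by `P` commutes with powers,
the iterates are `P * diagonal (σ ^ ℓ) * P⁻¹ *ᵥ u₀`, which tend to `0` coordinatewise.
-/

open Matrix Filter Topology

lemma abs_one_sub_div_lt_one {N D : ℝ} (hN : 0 < N) (hND : N < 2 * D) : |1 - N / D| < 1 := by
  have hD : 0 < D := by linarith
  rw [abs_sub_lt_iff, sub_lt_self_iff, sub_lt_iff_lt_add, div_lt_iff₀ hD]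
  exact ⟨div_pos hN hD, by linarith⟩

lemma abs_limitingStabilityIndex_lt_one {M s : ℝ} (hM : 0 ≤ M) (hs : 0 ≤ s) :
    |1 - ((1/2) * (1 + 1 / M) + s) /
        ((1/3) * (1 + 3 / (2 * M) + 1 / (2 * M ^ 2)) + s * (1 + 1 / M) + s ^ 2)| < 1 := by
  apply abs_one_sub_div_lt_one (by positivity)
  have hgap : 2 * ((1/3) * (1 + 3 / (2 * M) + 1 / (2 * M ^ 2)) + s * (1 + 1 / M) + s ^ 2)
      - ((1/2) * (1 + 1 / M) + s)
      = 1/6 + 1 / (2 * M) + 1 / (3 * M ^ 2) + s + 2 * s / M + 2 * s ^ 2 := by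
    ring
  have : 0 < 1/6 + 1 / (2 * M) + 1 / (3 * M ^ 2) + s + 2 * s / M + 2 * s ^ 2 := by positivity
  linarith

section

variable {𝕜 n : Type*} [NormedField 𝕜] [Fintype n] [DecidableEq n]

lemma tendsto_diagonal_pow_mulVec_nhds_zero {σ : n → 𝕜} (hσ : ∀ j, ‖σ j‖ < 1) (v : n → 𝕜) :
    Tendsto (fun ℓ : ℕ => diagonal σ ^ ℓ *ᵥ v) atTop (𝓝 0) := by
  rw [tendsto_pi_nhds]
  intro j
  simp_rw [diagonal_pow, mulVec_diagonal, Pi.pow_apply]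
  simpa using (tendsto_pow_atTop_nhds_zero_of_norm_lt_one (hσ j)).mul_const (v j)

lemma tendsto_conj_diagonal_pow_mulVec_nhds_zero {P : Matrix n n 𝕜} (hP : IsUnit P.det)
    {σ : n → 𝕜} (hσ : ∀ j, ‖σ j‖ < 1) (u : n → 𝕜) :
    Tendsto (fun ℓ : ℕ => (P * diagonal σ * P⁻¹) ^ ℓ *ᵥ u) atTop (𝓝 0) := by
  have hconj (ℓ : ℕ) : (P * diagonal σ * P⁻¹) ^ ℓ = P * diagonal σ ^ ℓ * P⁻¹ :=
    Units.conj_pow (P.nonsingInvUnit hP) _ ℓ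
  simp_rw [hconj, ← mulVec_mulVec]
  have hP_cont : Continuous (P *ᵥ · : (n → 𝕜) → n → 𝕜) :=
    continuous_const.matrix_mulVec continuous_id
  have := (hP_cont.tendsto 0).comp (tendsto_diagonal_pow_mulVec_nhds_zero hσ (P⁻¹ *ᵥ u))
  rwa [mulVec_zero] at this

end

theorem stmt_14_general (d M : ℕ) (h : ℝ) (hh : 0 < h)
    (P : Matrix (Fin d) (Fin d) ℝ) (hP : IsUnit P.det)
    (lam : Fin d → ℝ) :
    let s : Fin d → ℝ := fun j => 1 / (|lam j| * h)
    let σ : Fin d → ℝ := fun j =>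
      1 - ((1/2) * (1 + 1 / (M : ℝ)) + s j) /
        ((1/3) * (1 + 3 / (2 * (M : ℝ)) + 1 / (2 * (M : ℝ) ^ 2))
          + s j * (1 + 1 / (M : ℝ)) + (s j) ^ 2)
    (∀ j, |σ j| < 1) ∧
    ∀ u0 : Fin d → ℝ,
      Tendsto (fun ℓ : ℕ => ((P * Matrix.diagonal σ * P⁻¹) ^ ℓ).mulVec u0)
        atTop (nhds 0) := by
  intro s σ
  have hσ (j : Fin d) : |σ j| < 1 :=
    abs_limitingStabilityIndex_lt_one (Nat.cast_nonneg M) (by positivity)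
  exact ⟨hσ, tendsto_conj_diagonal_pow_mulVec_nhds_zero hP hσ⟩

/-- For a diagonalizable system with negative eigenvalues
`λ₁,…,λ_d < 0`, step size `h > 0` and `sⱼ = 1/(|λⱼ|h)`, the limiting stability indices
`σⱼ = 1 − (½(1+1/M)+sⱼ)/((1/3)(1+3/(2M)+1/(2M²))+sⱼ(1+1/M)+sⱼ²)` satisfy `|σⱼ| < 1`,
and the iteration `û_{ℓ+1} = P·diag(σ)·P⁻¹·û_ℓ` converges to `0`. -/
theorem stmt_14 (d M : ℕ) (hd : 1 ≤ d) (hM : 1 ≤ M) (h : ℝ) (hh : 0 < h)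
    (P : Matrix (Fin d) (Fin d) ℝ) (hP : IsUnit P.det)
    (lam : Fin d → ℝ) (hlam : ∀ j, lam j < 0) :
    let s : Fin d → ℝ := fun j => 1 / (|lam j| * h)
    let σ : Fin d → ℝ := fun j =>
      1 - ((1/2) * (1 + 1 / (M : ℝ)) + s j) /
        ((1/3) * (1 + 3 / (2 * (M : ℝ)) + 1 / (2 * (M : ℝ) ^ 2))
          + s j * (1 + 1 / (M : ℝ)) + (s j) ^ 2)
    (∀ j, |σ j| < 1) ∧
    ∀ u0 : Fin d → ℝ,
      Tendsto (fun ℓ : ℕ => ((P * Matrix.diagonal σ * P⁻¹) ^ ℓ).mulVec u0)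
        atTop (nhds 0) :=
  stmt_14_general d M h hh P hP lam
end

section
/- Let m ≥ 1, 0 ≤ ρ < 1 and C ≥ 0, and let (A_i)_{i ≥ 1} be a sequence of upper triangular matrices in ℝ^{m×m} such that |(A_i)_{jj}| ≤ ρ for all i and all j, and |(A_i)_{jk}| ≤ C for all i, j, k. Then the products A_i A_{i−1} ⋯ A_1 converge to the zero matrix as i → ∞; in particular, for every y₀ ∈ ℝ^m, the sequence y_i = A_i A_{i−1} ⋯ A_1 y₀ converges to 0. -/
open Matrix Filter

/-!
Conjugating by `D = diag(1, ε, …, ε^(m-1))` multiplies the `(j, l)` entry of a matrix by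
`ε^(l-j)`. For an upper triangular factor this leaves the diagonal unchanged and makes the
strictly upper part of size at most `C ε`, so for small `ε` every `D⁻¹ Aᵢ D` has
`∞`-operator norm at most `ρ + m C ε < 1`. The conjugated products therefore decay
geometrically, and so do the products themselves.
-/

theorem tendsto_zero_of_eq_mul_of_norm_le {R : Type*} [SeminormedRing R] {B P : ℕ → R} {r : ℝ}
    (hr : r < 1) (hB : ∀ n, ‖B (n + 1)‖ ≤ r) (hP : ∀ n, P (n + 1) = B (n + 1) * P n) :
    Tendsto P atTop (nhds 0) := by
  have hr0 : 0 ≤ r := (norm_nonneg _).trans (hB 0)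
  have hgeom : ∀ n, ‖P n‖ ≤ ‖P 0‖ * r ^ n := by
    intro n
    induction n with
    | zero => simp
    | succ n ih =>
      calc ‖P (n + 1)‖ ≤ ‖B (n + 1)‖ * ‖P n‖ := hP n ▸ norm_mul_le _ _
        _ ≤ r * (‖P 0‖ * r ^ n) := by gcongr; exact hB n
        _ = ‖P 0‖ * r ^ (n + 1) := by ring
  refine squeeze_zero_norm hgeom ?_
  simpa using (tendsto_pow_atTop_nhds_zero_of_lt_one hr0 hr).const_mul ‖P 0‖

theorem tendsto_zero_of_eq_mul_of_norm_conj_le {R : Type*} [SeminormedRing R] {S T : R}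
    (hST : S * T = 1) {B P : ℕ → R} {r : ℝ} (hr : r < 1)
    (hB : ∀ n, ‖T * B (n + 1) * S‖ ≤ r) (hP : ∀ n, P (n + 1) = B (n + 1) * P n) :
    Tendsto P atTop (nhds 0) := by
  have hconj : Tendsto (fun n => T * P n * S) atTop (nhds 0) := by
    refine tendsto_zero_of_eq_mul_of_norm_le (B := fun n => T * B n * S) hr hB fun n => ?_
    show T * P (n + 1) * S = T * B (n + 1) * S * (T * P n * S)
    simp only [hP, mul_assoc]
    rw [← mul_assoc S, hST, one_mul]
  have hP_eq : P = fun n => S * (T * P n * S) * T := by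
    funext n
    simp only [← mul_assoc, hST, one_mul]
    rw [mul_assoc, hST, mul_one]
  rw [hP_eq]
  simpa using (hconj.const_mul S).mul_const T

namespace Matrix

section LinftyOp

attribute [local instance] Matrix.linftyOpSeminormedAddCommGroup Matrix.linftyOpNormedRing

theorem linfty_opNorm_le_of_sum_le {m n α : Type*} [Fintype m] [Fintype n]
    [SeminormedAddCommGroup α] {M : Matrix m n α} {c : ℝ} (hc : 0 ≤ c)
    (h : ∀ i, ∑ j, ‖M i j‖ ≤ c) : ‖M‖ ≤ c := by
  rw [linfty_opNorm_def, ← Real.coe_toNNReal c hc, NNReal.coe_le_coe]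
  refine Finset.sup_le fun i _ => ?_
  rw [← NNReal.coe_le_coe, Real.coe_toNNReal c hc, NNReal.coe_sum]
  exact h i

theorem linfty_opNorm_diagonal_conj_le {m : ℕ} {B : Matrix (Fin m) (Fin m) ℝ} {ρ C ε : ℝ}
    (hB : B.BlockTriangular id) (hdiag : ∀ j, |B j j| ≤ ρ) (hbound : ∀ j l, j < l → |B j l| ≤ C)
    (hρ : 0 ≤ ρ) (hC : 0 ≤ C) (hε0 : 0 < ε) (hε1 : ε ≤ 1) :
    ‖diagonal (fun j : Fin m => (ε ^ (j : ℕ))⁻¹) * B * diagonal (fun j : Fin m => ε ^ (j : ℕ))‖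
      ≤ ρ + m * C * ε := by
  have hentry : ∀ j l : Fin m, |B j l| * (ε ^ (l : ℕ) / ε ^ (j : ℕ))
      ≤ (if l = j then ρ else 0) + C * ε := by
    intro j l
    have hCε : 0 ≤ C * ε := mul_nonneg hC hε0.le
    rcases lt_trichotomy l j with hlj | rfl | hjl
    · simp [hB hlj, hlj.ne, hCε]
    · rw [div_self (pow_ne_zero _ hε0.ne'), mul_one, if_pos rfl]
      linarith [hdiag l]
    · have hpow : ε ^ (l : ℕ) / ε ^ (j : ℕ) ≤ ε := by
        rw [div_le_iff₀ (pow_pos hε0 _), ← pow_succ']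
        exact pow_le_pow_of_le_one hε0.le hε1 hjl
      rw [if_neg hjl.ne', zero_add]
      exact mul_le_mul (hbound j l hjl) hpow (by positivity) hC
  refine linfty_opNorm_le_of_sum_le (by positivity) fun j => ?_
  calc ∑ l, ‖(diagonal (fun j : Fin m => (ε ^ (j : ℕ))⁻¹) * B *
          diagonal (fun j : Fin m => ε ^ (j : ℕ))) j l‖
      ≤ ∑ l, ((if l = j then ρ else 0) + C * ε) := by
        gcongr with l
        refine le_of_eq ?_ |>.trans (hentry j l)
        rw [mul_diagonal, diagonal_mul, Real.norm_eq_abs, abs_mul, abs_mul, abs_inv,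
          abs_of_pos (pow_pos hε0 _), abs_of_pos (pow_pos hε0 _)]
        ring
    _ = ρ + m * C * ε := by
        simp [Finset.sum_add_distrib, Finset.sum_ite_eq']; ring

theorem tendsto_prod_zero_of_blockTriangular {m : ℕ} {A P : ℕ → Matrix (Fin m) (Fin m) ℝ}
    {ρ C : ℝ} (hρ0 : 0 ≤ ρ) (hρ1 : ρ < 1) (hC : 0 ≤ C)
    (hA : ∀ n, (A (n + 1)).BlockTriangular id) (hdiag : ∀ n j, |A (n + 1) j j| ≤ ρ)
    (hbound : ∀ n j l, j < l → |A (n + 1) j l| ≤ C) (hP : ∀ n, P (n + 1) = A (n + 1) * P n) :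
    Tendsto P atTop (nhds 0) := by
  obtain ⟨c, hc0, hc⟩ := exists_pos_mul_lt (sub_pos.2 hρ1) (m * C)
  set ε := min c 1
  have hε0 : 0 < ε := lt_min hc0 one_pos
  have hr : ρ + m * C * ε < 1 := by
    nlinarith [mul_le_mul_of_nonneg_left (min_le_left c 1) (by positivity : (0 : ℝ) ≤ m * C)]
  have hw : ∀ j : Fin m, ε ^ (j : ℕ) ≠ 0 := fun j => pow_ne_zero _ hε0.ne'
  refine tendsto_zero_of_eq_mul_of_norm_conj_le (S := diagonal fun j : Fin m => ε ^ (j : ℕ))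
    (T := diagonal fun j : Fin m => (ε ^ (j : ℕ))⁻¹) ?_ hr (fun n => ?_) hP
  · rw [diagonal_mul_diagonal, ← diagonal_one]
    exact congrArg diagonal (funext fun j => mul_inv_cancel₀ (hw j))
  exact linfty_opNorm_diagonal_conj_le (hA n) (hdiag n) (hbound n) hρ0 hC hε0 (min_le_right c 1)

end LinftyOp

end Matrix

theorem stmt_15_general (m : ℕ) (ρ C : ℝ) (hρ0 : 0 ≤ ρ) (hρ1 : ρ < 1)
    (hC : 0 ≤ C) (A : ℕ → Matrix (Fin m) (Fin m) ℝ)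
    (hupper : ∀ i : ℕ, 1 ≤ i → ∀ j k : Fin m, k < j → A i j k = 0)
    (hdiag : ∀ i : ℕ, 1 ≤ i → ∀ j : Fin m, |A i j j| ≤ ρ)
    (hbound : ∀ i : ℕ, 1 ≤ i → ∀ j k : Fin m, |A i j k| ≤ C) :
    let prod : ℕ → Matrix (Fin m) (Fin m) ℝ := fun n =>
      Nat.rec (1 : Matrix (Fin m) (Fin m) ℝ) (fun k Pk => A (k + 1) * Pk) n
    Tendsto prod atTop (nhds 0) ∧
    ∀ y0 : Fin m → ℝ, Tendsto (fun n => (prod n).mulVec y0) atTop (nhds 0) := by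
  intro prod
  have hprod : Tendsto prod atTop (nhds 0) :=
    tendsto_prod_zero_of_blockTriangular hρ0 hρ1 hC
      (fun n j k => hupper (n + 1) n.succ_pos j k) (fun n => hdiag (n + 1) n.succ_pos)
      (fun n j l _ => hbound (n + 1) n.succ_pos j l) fun n => rfl
  refine ⟨hprod, fun y0 => ?_⟩
  simpa [Function.comp_def] using ((continuous_id.matrix_mulVec continuous_const).tendsto 0).comp hprod

/-- If `(A_i)_{i≥1}` are upper triangular `m×m` matrices with diagonal
entries bounded by `ρ < 1` in absolute value and all entries bounded by `C`, then the
products `A_i⋯A_1` converge to the zero matrix, and `y_i = A_i⋯A_1 y₀ → 0` for every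
`y₀`. -/
theorem stmt_15 (m : ℕ) (hm : 1 ≤ m) (ρ C : ℝ) (hρ0 : 0 ≤ ρ) (hρ1 : ρ < 1)
    (hC : 0 ≤ C) (A : ℕ → Matrix (Fin m) (Fin m) ℝ)
    (hupper : ∀ i : ℕ, 1 ≤ i → ∀ j k : Fin m, k < j → A i j k = 0)
    (hdiag : ∀ i : ℕ, 1 ≤ i → ∀ j : Fin m, |A i j j| ≤ ρ)
    (hbound : ∀ i : ℕ, 1 ≤ i → ∀ j k : Fin m, |A i j k| ≤ C) :
    let prod : ℕ → Matrix (Fin m) (Fin m) ℝ := fun n =>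
      Nat.rec (1 : Matrix (Fin m) (Fin m) ℝ) (fun k Pk => A (k + 1) * Pk) n
    Tendsto prod atTop (nhds 0) ∧
    ∀ y0 : Fin m → ℝ, Tendsto (fun n => (prod n).mulVec y0) atTop (nhds 0) :=
  stmt_15_general m ρ C hρ0 hρ1 hC A hupper hdiag hbound
end
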